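/- Let E ⊆ ℝ be a G_δ set of Lebesgue measure zero. Then there exists a continuous, monotone (nondecreasing) function f : ℝ → ℝ such that L_f^∞ = E, l_f^∞ = ∅, and moreover lip f(x) = 0 for every x ∈ E. -/

import Mathlib

open Set Filter MeasureTheory Topology
open scoped ENNReal NNReal

/-- `M_f(x,r) = sup { |f(x)-f(y)|/r : |x-y| ≤ r }`, valued in `[0,∞]`. -/
noncomputable def Mf (f : ℝ → ℝ) (x r : ℝ) : ℝ≥0∞ :=
  ⨆ y ∈ {y : ℝ | |x - y| ≤ r}, ENNReal.ofReal (|f x - f y| / r)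

/-- The big Lip function: `Lip f(x) = limsup_{r→0⁺} M_f(x,r)`. -/
noncomputable def bigLip (f : ℝ → ℝ) (x : ℝ) : ℝ≥0∞ :=
  Filter.limsup (fun r => Mf f x r) (𝓝[>] (0 : ℝ))

/-- The little lip function: `lip f(x) = liminf_{r→0⁺} M_f(x,r)`. -/
noncomputable def litLip (f : ℝ → ℝ) (x : ℝ) : ℝ≥0∞ :=
  Filter.liminf (fun r => Mf f x r) (𝓝[>] (0 : ℝ))

/-- A set `E ⊆ ℝ` is trim if `λ(E ∩ (a,b)) < b - a` for every open interval `(a,b)`. -/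
def Trim (E : Set ℝ) : Prop :=
  ∀ a b : ℝ, a < b → volume (E ∩ Ioo a b) < ENNReal.ofReal (b - a)

/-!
Choose open sets `W₀ ⊇ W₁ ⊇ ⋯` with `⋂ Wₖ = E` and `|Wₖ| ≤ 4⁻ᵏ` such that `Wₖ₊₁` is thin near the
boundary of `Wₖ`: the part of `Wₖ₊₁` within distance `s` of `Wₖᶜ` has measure at most `4⁻⁽ᵏ⁺¹⁾ s`.
This is possible because `E` is null: cover `E` annulus by annulus around `Wₖᶜ`, with open sets
whose measure decays fast enough. Let `f` be the distribution function of the measure with density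
`2ʲ` on the layer `W₂ⱼ₊₁ \ W₂ⱼ₊₂`; it is continuous and nondecreasing.

For `x ∈ E` and `r = dist(x, W₂ⱼ₊₁ᶜ)`, the ball `B(x, r)` lies in `W₂ⱼ₊₁` and, by thinness, mostly
outside `W₂ⱼ₊₂`, so `M_f(x, r) ≥ 2ʲ⁻¹`. For `t = dist(x, W₂ⱼ₊₂ᶜ)`, the ball `B(x, t)` misses the
layers `0, …, j` and meets each later layer `i` in measure at most `16⁻ⁱ t`, so `M_f(x, t) ≤ 2¹⁻ʲ`.
For `x ∉ E` we have `x ∉ W_N` for some `N`, and the same thinness bound, for the layers with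
`2i ≥ N`, keeps `M_f(x, ·)` bounded.
-/

open Metric

lemma ENNReal.ofReal_inv_two_pow (n : ℕ) : ENNReal.ofReal ((2⁻¹ : ℝ) ^ n) = 2⁻¹ ^ n := by
  rw [ENNReal.ofReal_pow (by norm_num), ENNReal.ofReal_inv_of_pos two_pos, ENNReal.ofReal_ofNat]

lemma ENNReal.tsum_inv_two_pow_succ : ∑' n : ℕ, (2⁻¹ : ℝ≥0∞) ^ (n + 1) = 1 := by
  simp_rw [pow_succ, ENNReal.tsum_mul_right, ENNReal.tsum_geometric_two]
  exact ENNReal.mul_inv_cancel two_ne_zero ENNReal.ofNat_ne_top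

lemma ENNReal.two_pow_mul_inv_two_pow (n : ℕ) : (2 : ℝ≥0∞) ^ n * 2⁻¹ ^ n = 1 := by
  rw [← mul_pow, ENNReal.mul_inv_cancel two_ne_zero ENNReal.ofNat_ne_top, one_pow]

lemma ENNReal.two_pow_mul_inv_two_pow_add (m n : ℕ) : (2 : ℝ≥0∞) ^ m * 2⁻¹ ^ (m + n) = 2⁻¹ ^ n := by
  rw [pow_add, ← mul_assoc, ENNReal.two_pow_mul_inv_two_pow, one_mul]

lemma ENNReal.inv_two_pow_le_inv_two_pow {m n : ℕ} (h : m ≤ n) : (2⁻¹ : ℝ≥0∞) ^ n ≤ 2⁻¹ ^ m :=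
  pow_le_pow_of_le_one zero_le (ENNReal.inv_le_one.2 one_le_two) h

section LimsupLiminf

variable {α : Type*} {l : Filter α} {φ : α → ℝ≥0∞} {r : ℕ → α} {c : ℕ → ℝ≥0∞}

lemma limsup_eq_top_of_tendsto_of_le (hr : Tendsto r atTop l) (hc : Tendsto c atTop (𝓝 ⊤))
    (h : ∀ n, c n ≤ φ (r n)) : limsup φ l = ⊤ :=
  top_unique <| calc
    ⊤ = limsup c atTop := hc.limsup_eq.symm
    _ ≤ limsup (φ ∘ r) atTop := limsup_le_limsup (Eventually.of_forall h)
    _ ≤ limsup φ l := hr.limsup_comp_le_limsup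

lemma liminf_eq_zero_of_tendsto_of_le (hr : Tendsto r atTop l) (hc : Tendsto c atTop (𝓝 0))
    (h : ∀ n, φ (r n) ≤ c n) : liminf φ l = 0 :=
  le_antisymm (calc
    liminf φ l ≤ liminf (φ ∘ r) atTop := hr.liminf_le_liminf_comp
    _ ≤ liminf c atTop := liminf_le_liminf (Eventually.of_forall h)
    _ = 0 := hc.liminf_eq) zero_le

end LimsupLiminf

lemma litLip_le_bigLip (f : ℝ → ℝ) (x : ℝ) : litLip f x ≤ bigLip f x :=
  liminf_le_limsup

lemma bigLip_ne_top_of_forall_Mf_le {f : ℝ → ℝ} {x : ℝ} {C : ℝ≥0∞} (hC : C ≠ ⊤)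
    (h : ∀ r, 0 < r → Mf f x r ≤ C) : bigLip f x ≠ ⊤ :=
  ne_top_of_le_ne_top hC <| limsup_le_of_le (h := eventually_nhdsWithin_of_forall h)

lemma ofReal_abs_sub_le_mul_Mf {f : ℝ → ℝ} {x y r : ℝ} (hr : 0 < r) (hy : |x - y| ≤ r) :
    ENNReal.ofReal |f x - f y| ≤ ENNReal.ofReal r * Mf f x r := by
  have h : ENNReal.ofReal (|f x - f y| / r) ≤ Mf f x r :=
    le_iSup₂ (f := fun y (_ : y ∈ {y : ℝ | |x - y| ≤ r}) => ENNReal.ofReal (|f x - f y| / r)) y hy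
  rwa [ENNReal.ofReal_div_of_pos hr,
    ENNReal.div_le_iff (ENNReal.ofReal_pos.2 hr).ne' ENNReal.ofReal_ne_top, mul_comm] at h

noncomputable def distribFun (μ : Measure ℝ) (x : ℝ) : ℝ := μ.real (Iic x)

section DistribFun

variable {μ : Measure ℝ} [IsFiniteMeasure μ]

lemma distribFun_mono : Monotone (distribFun μ) :=
  fun _ _ h => measureReal_mono (Iic_subset_Iic.2 h)

lemma distribFun_sub_distribFun {a b : ℝ} (hab : a ≤ b) :
    distribFun μ b - distribFun μ a = μ.real (Ioc a b) := by
  rw [distribFun, distribFun, ← Iic_union_Ioc_eq_Iic hab,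
    measureReal_union (Iic_disjoint_Ioc le_rfl) measurableSet_Ioc]
  ring

lemma abs_distribFun_sub_le {x y r : ℝ} (h : |x - y| ≤ r) :
    |distribFun μ x - distribFun μ y| ≤ μ.real (closedBall x r) := by
  have key : ∀ {a b : ℝ}, a ≤ b → x - r ≤ a → b ≤ x + r →
      |distribFun μ b - distribFun μ a| ≤ μ.real (closedBall x r) := by
    intro a b hab ha hb
    rw [abs_of_nonneg (sub_nonneg.2 (distribFun_mono hab)), distribFun_sub_distribFun hab,
      Real.closedBall_eq_Icc]
    exact measureReal_mono (Ioc_subset_Icc_self.trans (Icc_subset_Icc ha hb))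
  obtain ⟨h₁, h₂⟩ := abs_le.1 h
  rcases le_total y x with hyx | hxy
  · exact key hyx (by linarith) (by linarith)
  · rw [abs_sub_comm]
    exact key hxy (by linarith) (by linarith)

lemma continuous_distribFun [NullSingletonClass μ] : Continuous (distribFun μ) := by
  refine continuous_iff_continuousAt.2 fun x => tendsto_iff_norm_sub_tendsto_zero.2 ?_
  have hball : Tendsto (fun y => μ.real (closedBall x (dist y x))) (𝓝 x) (𝓝 0) := by
    have h := (tendsto_measure_cthickening_of_isClosed (μ := μ) ⟨1, one_pos, measure_ne_top _ _⟩
      (isClosed_singleton (x := x))).comp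
        ((continuous_id.dist continuous_const).tendsto' x 0 (dist_self x))
    rw [measure_singleton] at h
    refine (ENNReal.tendsto_toReal ENNReal.zero_ne_top).comp (h.congr fun y => ?_)
    simp only [Function.comp_apply, id, cthickening_singleton x dist_nonneg]
  refine squeeze_zero (fun _ => norm_nonneg _) (fun y => ?_) hball
  rw [Real.norm_eq_abs, abs_sub_comm]
  exact abs_distribFun_sub_le (by rw [abs_sub_comm, ← Real.dist_eq])

lemma Mf_distribFun_le {x r : ℝ} {c : ℝ≥0∞} (hr : 0 < r)
    (h : μ (closedBall x r) ≤ c * ENNReal.ofReal r) : Mf (distribFun μ) x r ≤ c := by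
  refine iSup₂_le fun y hy => ?_
  rw [ENNReal.ofReal_div_of_pos hr]
  refine ENNReal.div_le_of_le_mul (le_trans ?_ h)
  rw [← ofReal_measureReal]
  exact ENNReal.ofReal_le_ofReal (abs_distribFun_sub_le hy)

lemma measure_Ioc_eq_ofReal_abs_distribFun_sub {a b : ℝ} (hab : a ≤ b) :
    μ (Ioc a b) = ENNReal.ofReal |distribFun μ b - distribFun μ a| := by
  rw [abs_of_nonneg (sub_nonneg.2 (distribFun_mono hab)), distribFun_sub_distribFun hab,
    ofReal_measureReal]

lemma measure_closedBall_le_two_mul_Mf_distribFun [NullSingletonClass μ] {x r : ℝ} (hr : 0 < r) :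
    μ (closedBall x r) ≤ 2 * ENNReal.ofReal r * Mf (distribFun μ) x r := by
  have hleft : μ (Ioc (x - r) x) ≤ ENNReal.ofReal r * Mf (distribFun μ) x r := by
    rw [measure_Ioc_eq_ofReal_abs_distribFun_sub (by linarith)]
    exact ofReal_abs_sub_le_mul_Mf hr (by rw [sub_sub_cancel, abs_of_pos hr])
  have hright : μ (Ioc x (x + r)) ≤ ENNReal.ofReal r * Mf (distribFun μ) x r := by
    rw [measure_Ioc_eq_ofReal_abs_distribFun_sub (by linarith), abs_sub_comm]
    exact ofReal_abs_sub_le_mul_Mf hr (by rw [sub_add_cancel_left, abs_neg, abs_of_pos hr])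
  calc μ (closedBall x r) = μ (Ioc (x - r) x) + μ (Ioc x (x + r)) := by
        rw [Real.closedBall_eq_Icc, ← measure_congr Ioc_ae_eq_Icc,
          ← Ioc_union_Ioc_eq_Ioc (b := x) (by linarith) (by linarith),
          measure_union (Ioc_disjoint_Ioc_of_le le_rfl) measurableSet_Ioc]
    _ ≤ 2 * ENNReal.ofReal r * Mf (distribFun μ) x r := by
        rw [mul_assoc, two_mul]
        exact add_le_add hleft hright

end DistribFun

section InfDist

variable {U : Set ℝ}

lemma ofReal_two_mul_infDist_compl_le_volume (U : Set ℝ) (y : ℝ) :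
    ENNReal.ofReal (2 * infDist y Uᶜ) ≤ volume U := by
  rw [← Real.volume_ball]
  exact measure_mono ball_infDist_compl_subset

lemma two_mul_infDist_compl_le_one (hU : volume U ≤ 1) (y : ℝ) : 2 * infDist y Uᶜ ≤ 1 :=
  ENNReal.ofReal_le_one.1 ((ofReal_two_mul_infDist_compl_le_volume U y).trans hU)

lemma nonempty_compl_of_volume_ne_top (hU : volume U ≠ ⊤) : Uᶜ.Nonempty :=
  nonempty_compl.2 fun h => hU (by rw [h, Real.volume_univ])

lemma infDist_compl_pos (hU : IsOpen U) (hU' : volume U ≠ ⊤) {y : ℝ} (hy : y ∈ U) :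
    0 < infDist y Uᶜ :=
  (hU.isClosed_compl.notMem_iff_infDist_pos (nonempty_compl_of_volume_ne_top hU')).1
    (not_not_intro hy)

lemma mem_of_infDist_compl_pos {y : ℝ} (hy : 0 < infDist y Uᶜ) : y ∈ U := by
  by_contra h
  exact hy.ne' (infDist_zero_of_mem h)

end InfDist

def ThinNear (V U : Set ℝ) (ε : ℝ≥0∞) : Prop :=
  ∀ s : ℝ, 0 < s → volume (V ∩ {y | infDist y Uᶜ ≤ s}) ≤ ε * ENNReal.ofReal s

namespace ThinNear

variable {V U : Set ℝ} {ε : ℝ≥0∞}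

lemma mono {W : Set ℝ} (h : ThinNear V U ε) (hWV : W ⊆ V) : ThinNear W U ε :=
  fun s hs => (measure_mono (inter_subset_inter_left _ hWV)).trans (h s hs)

lemma volume_le (h : ThinNear V U ε) (hU : volume U ≤ 1) : volume V ≤ ε := by
  have hV : V ∩ {y | infDist y Uᶜ ≤ 1} = V :=
    inter_eq_left.2 fun y _ => by
      have := two_mul_infDist_compl_le_one hU y
      have := infDist_nonneg (x := y) (s := Uᶜ)
      show _ ≤ (1 : ℝ)
      linarith
  simpa [hV] using h 1 one_pos

lemma volume_inter_closedBall_le (h : ThinNear V U ε) {x t : ℝ} (ht : 0 < t)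
    (hx : infDist x Uᶜ ≤ t) : volume (V ∩ closedBall x t) ≤ 2 * ε * ENNReal.ofReal t := by
  have hsub : V ∩ closedBall x t ⊆ V ∩ {y | infDist y Uᶜ ≤ 2 * t} := fun y hy => by
    have := infDist_le_infDist_add_dist (x := y) (y := x) (s := Uᶜ)
    have := mem_closedBall.1 hy.2
    exact ⟨hy.1, show _ ≤ 2 * t by linarith⟩
  calc volume (V ∩ closedBall x t) ≤ ε * ENNReal.ofReal (2 * t) :=
        (measure_mono hsub).trans (h (2 * t) (by linarith))
    _ = 2 * ε * ENNReal.ofReal t := by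
        rw [ENNReal.ofReal_mul zero_le_two, ENNReal.ofReal_ofNat]
        ring

end ThinNear

lemma exists_thinNear {E U : Set ℝ} (hE : volume E = 0) (hU : IsOpen U) (hEU : E ⊆ U)
    (hU1 : volume U ≤ 1) {ε : ℝ≥0∞} (hε : ε ≠ 0) :
    ∃ V, IsOpen V ∧ E ⊆ V ∧ V ⊆ U ∧ ThinNear V U ε := by
  set d : ℝ → ℝ := fun y => infDist y Uᶜ
  -- On the annulus `A i` we have `d ≈ 2⁻ⁱ`; only the annuli with `2⁻⁽ⁱ⁺¹⁾ < s` meet `{d ≤ s}`, and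
  -- there a cover of `E ∩ A i` of measure `ε 4⁻⁽ⁱ⁺¹⁾` has measure at most `ε s 2⁻⁽ⁱ⁺¹⁾`.
  set A : ℕ → Set ℝ := fun i => d ⁻¹' Ioo ((2⁻¹ : ℝ) ^ (i + 1)) (2 * 2⁻¹ ^ i)
  have hA : ∀ i, IsOpen (A i) := fun i => continuous_infDist_pt _ |>.isOpen_preimage _ isOpen_Ioo
  have hEA : ∀ y ∈ E, ∃ i, y ∈ A i := by
    intro y hy
    have hd : 0 < d y := infDist_compl_pos hU (ne_top_of_le_ne_top ENNReal.one_ne_top hU1) (hEU hy)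
    have hd1 := two_mul_infDist_compl_le_one hU1 y
    obtain ⟨n, hn, hn'⟩ := exists_nat_pow_near (one_le_inv₀ hd |>.2 (by linarith)) one_lt_two
    refine ⟨n, ?_, ?_⟩
    · rw [inv_pow]
      exact (inv_lt_comm₀ hd (by positivity)).1 hn'
    · rw [inv_pow]
      have := (le_inv_comm₀ (by positivity) hd).1 hn
      have : (0 : ℝ) < (2 ^ n)⁻¹ := by positivity
      linarith
  have hcover : ∀ i, ∃ O, E ∩ A i ⊆ O ∧ IsOpen O ∧
      volume O < ε * 2⁻¹ ^ (i + 1) * 2⁻¹ ^ (i + 1) := fun i =>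
    (E ∩ A i).exists_isOpen_lt_of_lt _ <| by
      rw [measure_mono_null inter_subset_left hE]
      exact pos_iff_ne_zero.2 (by simp [hε])
  choose O hEO hO hvol using hcover
  refine ⟨⋃ i, O i ∩ A i, isOpen_iUnion fun i => (hO i).inter (hA i), fun y hy => ?_,
    iUnion_subset fun i y hy => mem_of_infDist_compl_pos ((pow_pos (by norm_num) _).trans hy.2.1),
    fun s hs => ?_⟩
  · obtain ⟨i, hi⟩ := hEA y hy
    exact mem_iUnion.2 ⟨i, hEO i ⟨hy, hi⟩, hi⟩
  have hterm : ∀ i, volume (O i ∩ A i ∩ {y | d y ≤ s}) ≤ ε * ENNReal.ofReal s * 2⁻¹ ^ (i + 1) := by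
    intro i
    by_cases hi : (2⁻¹ : ℝ) ^ (i + 1) < s
    · calc volume (O i ∩ A i ∩ {y | d y ≤ s}) ≤ volume (O i) := measure_mono fun y hy => hy.1.1
        _ ≤ ε * 2⁻¹ ^ (i + 1) * 2⁻¹ ^ (i + 1) := (hvol i).le
        _ ≤ ε * ENNReal.ofReal s * 2⁻¹ ^ (i + 1) := by
          gcongr
          rw [← ENNReal.ofReal_inv_two_pow]
          exact ENNReal.ofReal_le_ofReal hi.le
    · have hempty : O i ∩ A i ∩ {y | d y ≤ s} = ∅ :=
        eq_empty_of_forall_notMem fun y hy => hi (hy.1.2.1.trans_le hy.2)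
      simp [hempty]
  calc volume ((⋃ i, O i ∩ A i) ∩ {y | d y ≤ s})
      ≤ ∑' i, volume (O i ∩ A i ∩ {y | d y ≤ s}) := by
        rw [iUnion_inter]
        exact measure_iUnion_le _
    _ ≤ ∑' i, ε * ENNReal.ofReal s * 2⁻¹ ^ (i + 1) := ENNReal.tsum_le_tsum hterm
    _ = ε * ENNReal.ofReal s := by
        rw [ENNReal.tsum_mul_left, ENNReal.tsum_inv_two_pow_succ, mul_one]

structure ThinningSeq (E : Set ℝ) where
  W : ℕ → Set ℝ
  isOpen : ∀ k, IsOpen (W k)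
  subset : ∀ k, E ⊆ W k
  succ_subset : ∀ k, W (k + 1) ⊆ W k
  iInter_subset : ⋂ k, W k ⊆ E
  volume_le : ∀ k, volume (W k) ≤ 2⁻¹ ^ (2 * k)
  thinNear : ∀ k, ThinNear (W (k + 1)) (W k) (2⁻¹ ^ (2 * k + 2))

lemma exists_thinningSeq {E : Set ℝ} (hGδ : IsGδ E) (hE : volume E = 0) :
    Nonempty (ThinningSeq E) := by
  obtain ⟨G, hGo, rfl⟩ := isGδ_iff_eq_iInter_nat.1 hGδ
  let Good (k : ℕ) := {V : Set ℝ // IsOpen V ∧ (⋂ n, G n) ⊆ V ∧ volume V ≤ 2⁻¹ ^ (2 * k)}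
  have step : ∀ k (V : Good k), ∃ V' : Good (k + 1),
      V'.1 ⊆ V.1 ∩ G k ∧ ThinNear V'.1 V.1 (2⁻¹ ^ (2 * k + 2)) := by
    rintro k ⟨V, hVo, hEV, hVvol⟩
    have hV1 : volume V ≤ 1 := hVvol.trans (pow_le_one₀ zero_le (ENNReal.inv_le_one.2 one_le_two))
    obtain ⟨V', hV'o, hEV', hV'V, hthin⟩ :=
      exists_thinNear hE hVo hEV hV1 (ε := 2⁻¹ ^ (2 * k + 2)) (by simp)
    have hthin' := hthin.mono (inter_subset_left (t := G k))
    exact ⟨⟨V' ∩ G k, hV'o.inter (hGo k), subset_inter hEV' (iInter_subset _ k),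
      (hthin'.volume_le hV1).trans_eq (by ring_nf)⟩, inter_subset_inter_left _ hV'V, hthin'⟩
  choose next hnext using step
  obtain ⟨U₀, hEU₀, hU₀, hU₀vol⟩ := (⋂ n, G n).exists_isOpen_lt_of_lt 1 (by rw [hE]; exact one_pos)
  let seq : ∀ k, Good k := fun k => Nat.rec ⟨U₀, hU₀, hEU₀, by simpa using hU₀vol.le⟩ next k
  exact ⟨{
    W := fun k => (seq k).1
    isOpen := fun k => (seq k).2.1
    subset := fun k => (seq k).2.2.1
    succ_subset := fun k => (hnext k (seq k)).1.trans inter_subset_left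
    iInter_subset := fun x hx =>
      mem_iInter.2 fun k => ((hnext k (seq k)).1 (mem_iInter.1 hx (k + 1))).2
    volume_le := fun k => (seq k).2.2.2
    thinNear := fun k => (hnext k (seq k)).2 }⟩

namespace ThinningSeq

variable {E : Set ℝ} (T : ThinningSeq E) {x : ℝ}

lemma antitone : Antitone T.W := antitone_nat_of_succ_le T.succ_subset

lemma volume_ne_top (k : ℕ) : volume (T.W k) ≠ ⊤ :=
  ne_top_of_le_ne_top (by simp) (T.volume_le k)

def layer (j : ℕ) : Set ℝ := T.W (2 * j + 1) \ T.W (2 * j + 2)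

lemma measurableSet_layer (j : ℕ) : MeasurableSet (T.layer j) :=
  (T.isOpen _).measurableSet.diff (T.isOpen _).measurableSet

protected noncomputable def measure : Measure ℝ :=
  Measure.sum fun j => (2 : ℝ≥0∞) ^ j • volume.restrict (T.layer j)

lemma measure_apply (s : Set ℝ) : T.measure s = ∑' j, 2 ^ j * volume (s ∩ T.layer j) := by
  simp only [ThinningSeq.measure, Measure.sum_apply_of_countable, Measure.smul_apply,
    Measure.restrict_apply' (T.measurableSet_layer _), smul_eq_mul]

lemma measure_le_of_forall_le {s : Set ℝ} {c : ℝ≥0∞}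
    (h : ∀ j, 2 ^ j * volume (s ∩ T.layer j) ≤ c * 2⁻¹ ^ j) : T.measure s ≤ 2 * c := by
  rw [measure_apply]
  calc ∑' j, 2 ^ j * volume (s ∩ T.layer j) ≤ ∑' j, c * 2⁻¹ ^ j := ENNReal.tsum_le_tsum h
    _ = 2 * c := by rw [ENNReal.tsum_mul_left, ENNReal.tsum_geometric_two, mul_comm]

instance : IsFiniteMeasure T.measure := by
  refine ⟨(T.measure_le_of_forall_le (s := univ) (c := 1) fun j => ?_).trans_lt (by simp)⟩
  calc 2 ^ j * volume (univ ∩ T.layer j) ≤ 2 ^ j * 2⁻¹ ^ (j + (3 * j + 2)) := by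
        gcongr
        exact (measure_mono fun y hy => hy.2.1).trans ((T.volume_le _).trans_eq (by ring_nf))
    _ ≤ 1 * 2⁻¹ ^ j := by
        rw [ENNReal.two_pow_mul_inv_two_pow_add, one_mul]
        exact ENNReal.inv_two_pow_le_inv_two_pow (by omega)

instance : NullSingletonClass T.measure :=
  ⟨fun x => by simp [measure_apply, measure_mono_null inter_subset_left (measure_singleton x)]⟩

noncomputable def scale (k : ℕ) (x : ℝ) : ℝ := infDist x (T.W k)ᶜ

lemma scale_pos (hx : x ∈ E) (k : ℕ) : 0 < T.scale k x :=
  infDist_compl_pos (T.isOpen k) (T.volume_ne_top k) (T.subset k hx)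

lemma scale_antitone (x : ℝ) : Antitone (T.scale · x) := fun k _ hkm =>
  infDist_le_infDist_of_subset (compl_subset_compl.2 (T.antitone hkm))
    (nonempty_compl_of_volume_ne_top (T.volume_ne_top k))

lemma scale_le (k : ℕ) (x : ℝ) : T.scale k x ≤ 2⁻¹ ^ k := by
  have h := (ofReal_two_mul_infDist_compl_le_volume (T.W k) x).trans (T.volume_le k)
  rw [← ENNReal.ofReal_inv_two_pow, ENNReal.ofReal_le_ofReal_iff (by positivity)] at h
  have : (2⁻¹ : ℝ) ^ (2 * k) ≤ 2⁻¹ ^ k :=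
    pow_le_pow_of_le_one (by norm_num) (by norm_num) (by omega)
  have : 0 ≤ T.scale k x := infDist_nonneg
  unfold scale at *
  linarith

lemma tendsto_scale (hx : x ∈ E) : Tendsto (T.scale · x) atTop (𝓝[>] 0) :=
  tendsto_nhdsWithin_iff.2 ⟨squeeze_zero (fun k => (T.scale_pos hx k).le) (T.scale_le · x)
    (tendsto_pow_atTop_nhds_zero_of_lt_one (by norm_num) (by norm_num)),
    Eventually.of_forall (T.scale_pos hx)⟩

lemma two_pow_mul_volume_closedBall_inter_layer_le {t : ℝ} (ht : 0 < t) {i : ℕ}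
    (hi : T.scale (2 * i) x ≤ t) :
    2 ^ i * volume (closedBall x t ∩ T.layer i) ≤ 2⁻¹ ^ (3 * i + 1) * ENNReal.ofReal t := by
  have h := (T.thinNear (2 * i)).volume_inter_closedBall_le ht hi
  calc 2 ^ i * volume (closedBall x t ∩ T.layer i)
      ≤ 2 ^ i * (2 * 2⁻¹ ^ (2 * (2 * i) + 2) * ENNReal.ofReal t) := by
        gcongr
        have hsub : closedBall x t ∩ T.layer i ⊆ T.W (2 * i + 1) ∩ closedBall x t :=
          fun y hy => ⟨hy.2.1, hy.1⟩
        exact (measure_mono hsub).trans h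
    _ = 2 ^ (i + 1) * 2⁻¹ ^ ((i + 1) + (3 * i + 1)) * ENNReal.ofReal t := by ring
    _ = 2⁻¹ ^ (3 * i + 1) * ENNReal.ofReal t := by rw [ENNReal.two_pow_mul_inv_two_pow_add]

lemma two_pow_mul_le_measure_closedBall (hx : x ∈ E) (j : ℕ) :
    2 ^ j * ENNReal.ofReal (T.scale (2 * j + 1) x) ≤
      T.measure (closedBall x (T.scale (2 * j + 1) x)) := by
  set r := T.scale (2 * j + 1) x
  have hr : 0 < r := T.scale_pos hx _
  have hthin : volume (T.W (2 * j + 2) ∩ closedBall x r) ≤ ENNReal.ofReal r := by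
    refine ((T.thinNear (2 * j + 1)).volume_inter_closedBall_le hr le_rfl).trans ?_
    calc 2 * 2⁻¹ ^ (2 * (2 * j + 1) + 2) * ENNReal.ofReal r
        = 2 ^ 1 * 2⁻¹ ^ (1 + (4 * j + 3)) * ENNReal.ofReal r := by ring
      _ ≤ ENNReal.ofReal r := by
        rw [ENNReal.two_pow_mul_inv_two_pow_add]
        exact mul_le_of_le_one_left (by positivity)
          (pow_le_one₀ zero_le (ENNReal.inv_le_one.2 one_le_two))
  have hcover : ball x r ⊆ (closedBall x r ∩ T.layer j) ∪ (T.W (2 * j + 2) ∩ closedBall x r) := by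
    intro y hy
    by_cases hyW : y ∈ T.W (2 * j + 2)
    · exact Or.inr ⟨hyW, ball_subset_closedBall hy⟩
    · exact Or.inl ⟨ball_subset_closedBall hy, ball_infDist_compl_subset hy, hyW⟩
  have hlayer : ENNReal.ofReal r ≤ volume (closedBall x r ∩ T.layer j) := by
    have h := (measure_mono (μ := volume) hcover).trans (measure_union_le _ _)
    rw [Real.volume_ball, ENNReal.ofReal_mul zero_le_two, ENNReal.ofReal_ofNat, two_mul] at h
    exact ENNReal.le_of_add_le_add_right ENNReal.ofReal_ne_top (h.trans (add_le_add le_rfl hthin))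
  calc 2 ^ j * ENNReal.ofReal r ≤ 2 ^ j * volume (closedBall x r ∩ T.layer j) := by gcongr
    _ ≤ T.measure (closedBall x r) := by
        rw [measure_apply]
        exact ENNReal.le_tsum j

lemma measure_closedBall_scale_le (hx : x ∈ E) (j : ℕ) :
    T.measure (closedBall x (T.scale (2 * j + 2) x)) ≤
      2 * 2⁻¹ ^ j * ENNReal.ofReal (T.scale (2 * j + 2) x) := by
  set t := T.scale (2 * j + 2) x
  have ht : 0 < t := T.scale_pos hx _
  rw [mul_assoc]
  refine T.measure_le_of_forall_le fun i => ?_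
  rcases le_or_gt i j with hij | hji
  · have hsphere : closedBall x t ∩ T.layer i ⊆ sphere x t := fun y hy =>
      mem_sphere.2 <| le_antisymm (mem_closedBall.1 hy.1) <| not_lt.1 fun hlt =>
        hy.2.2 (T.antitone (show 2 * i + 2 ≤ 2 * j + 2 by omega)
          (ball_infDist_compl_subset (mem_ball.2 hlt)))
    rw [measure_mono_null hsphere (Measure.addHaar_sphere volume x t), mul_zero]
    exact zero_le
  · calc 2 ^ i * volume (closedBall x t ∩ T.layer i) ≤ 2⁻¹ ^ (3 * i + 1) * ENNReal.ofReal t :=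
          T.two_pow_mul_volume_closedBall_inter_layer_le ht (T.scale_antitone x (by omega))
      _ ≤ 2⁻¹ ^ (j + i) * ENNReal.ofReal t := by
          gcongr ?_ * _
          exact ENNReal.inv_two_pow_le_inv_two_pow (by omega)
      _ = 2⁻¹ ^ j * ENNReal.ofReal t * 2⁻¹ ^ i := by ring

lemma measure_closedBall_le_of_notMem {N : ℕ} (hx : x ∉ T.W N) {t : ℝ} (ht : 0 < t) :
    T.measure (closedBall x t) ≤ 2 * (2 * 2 ^ N * ENNReal.ofReal t) := by
  refine T.measure_le_of_forall_le fun i => ?_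
  rcases le_or_gt N (2 * i) with hNi | hiN
  · have hscale : T.scale (2 * i) x = 0 := infDist_zero_of_mem fun h => hx (T.antitone hNi h)
    calc 2 ^ i * volume (closedBall x t ∩ T.layer i) ≤ 2⁻¹ ^ (3 * i + 1) * ENNReal.ofReal t :=
          T.two_pow_mul_volume_closedBall_inter_layer_le ht (hscale.trans_le ht.le)
      _ ≤ 1 * 2⁻¹ ^ i * ENNReal.ofReal t := by
          rw [one_mul]
          gcongr ?_ * _
          exact ENNReal.inv_two_pow_le_inv_two_pow (by omega)
      _ ≤ 2 * 2 ^ N * ENNReal.ofReal t * 2⁻¹ ^ i := by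
          rw [mul_right_comm]
          gcongr
          exact one_le_mul_of_one_le_of_one_le one_le_two (one_le_pow₀ one_le_two)
  · calc 2 ^ i * volume (closedBall x t ∩ T.layer i) ≤ 2 ^ i * (2 * ENNReal.ofReal t) := by
          gcongr
          refine (measure_mono inter_subset_left).trans_eq ?_
          rw [Real.volume_closedBall, ENNReal.ofReal_mul zero_le_two, ENNReal.ofReal_ofNat]
      _ = 2 * 2 ^ (i + i) * ENNReal.ofReal t * 2⁻¹ ^ i := by
          rw [pow_add, show 2 * (2 ^ i * 2 ^ i) * ENNReal.ofReal t * 2⁻¹ ^ i =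
            2 * 2 ^ i * ENNReal.ofReal t * (2 ^ i * 2⁻¹ ^ i) by ring,
            ENNReal.two_pow_mul_inv_two_pow]
          ring
      _ ≤ 2 * 2 ^ N * ENNReal.ofReal t * 2⁻¹ ^ i := by
          gcongr
          · exact one_le_two
          · omega

lemma bigLip_eq_top (hx : x ∈ E) : bigLip (distribFun T.measure) x = ⊤ := by
  have hodd : Tendsto (fun j : ℕ => 2 * j + 1) atTop atTop :=
    tendsto_atTop_mono (fun j => by dsimp only [id]; omega) tendsto_id
  refine limsup_eq_top_of_tendsto_of_le (r := fun j => T.scale (2 * j + 1) x)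
    ((T.tendsto_scale hx).comp hodd)
    (c := fun j => 2 ^ j / 2) ?_ fun j => ENNReal.div_le_of_le_mul' ?_
  · simpa [ENNReal.top_div_of_ne_top] using ENNReal.Tendsto.div_const
      (ENNReal.tendsto_pow_atTop_nhds_top_iff.2 ENNReal.one_lt_two) (Or.inr two_ne_zero)
  · have hr := T.scale_pos hx (2 * j + 1)
    have h := (T.two_pow_mul_le_measure_closedBall hx j).trans
      (measure_closedBall_le_two_mul_Mf_distribFun hr)
    exact (ENNReal.mul_le_mul_iff_left (ENNReal.ofReal_pos.2 hr).ne' ENNReal.ofReal_ne_top).1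
      (h.trans_eq (by ring))

lemma litLip_eq_zero (hx : x ∈ E) : litLip (distribFun T.measure) x = 0 := by
  have heven : Tendsto (fun j : ℕ => 2 * j + 2) atTop atTop :=
    tendsto_atTop_mono (fun j => by dsimp only [id]; omega) tendsto_id
  have hc : Tendsto (fun j : ℕ => 2 * (2⁻¹ : ℝ≥0∞) ^ j) atTop (𝓝 0) := by
    simpa using ENNReal.Tendsto.const_mul
      (ENNReal.tendsto_pow_atTop_nhds_zero_of_lt_one (by norm_num)) (Or.inr ENNReal.ofNat_ne_top)
  exact liminf_eq_zero_of_tendsto_of_le (r := fun j => T.scale (2 * j + 2) x)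
    ((T.tendsto_scale hx).comp heven) hc
    fun j => Mf_distribFun_le (T.scale_pos hx _) (T.measure_closedBall_scale_le hx j)

lemma bigLip_ne_top (hx : x ∉ E) : bigLip (distribFun T.measure) x ≠ ⊤ := by
  obtain ⟨N, hN⟩ : ∃ N, x ∉ T.W N := by
    by_contra! h
    exact hx (T.iInter_subset (mem_iInter.2 h))
  refine bigLip_ne_top_of_forall_Mf_le (C := 2 * (2 * 2 ^ N)) (by finiteness) fun r hr =>
    Mf_distribFun_le hr ((T.measure_closedBall_le_of_notMem hN hr).trans_eq (by ring))

end ThinningSeq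

theorem exists_monotone_of_measure_zero_Gdelta (E : Set ℝ) (hGδ : IsGδ E)
    (hE : volume E = 0) :
    ∃ f : ℝ → ℝ, Continuous f ∧ Monotone f ∧ {x : ℝ | bigLip f x = ⊤} = E ∧
      (∀ x : ℝ, litLip f x ≠ ⊤) ∧ (∀ x ∈ E, litLip f x = 0) := by
  obtain ⟨T⟩ := exists_thinningSeq hGδ hE
  refine ⟨distribFun T.measure, continuous_distribFun, distribFun_mono, ?_, fun x => ?_,
    fun x hx => T.litLip_eq_zero hx⟩
  · ext x
    exact ⟨fun h => by_contra fun hx => T.bigLip_ne_top hx h, T.bigLip_eq_top⟩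
  · by_cases hx : x ∈ E
    · simp [T.litLip_eq_zero hx]
    · exact ne_top_of_le_ne_top (T.bigLip_ne_top hx) (litLip_le_bigLip _ _)
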